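/- arXiv:1809.00735 — 3 statements merged into one kernel-verified Lean document; each statement's English description precedes it below -/
import Mathlib

section
/- Fix a constant c > 1. There exists a constant C = C(c) > 0 with the following property: for every real d ≥ 2, every integer p ≥ d, every real a with e^d ≤ a < c·e^{2d}, setting (2a)* = min(2a, c·e^{2d}) and H = p²·φ_{p−2}((2a)*), one has, for all x ∈ [a, (2a)*]: φ_p(x) ≤ C·H, |φ_p'(x)| ≤ C·H·a^{−1}, and |φ_p''(x)| ≤ C·H·a^{−2}. -/
/-- `φ_m(x) = x^{-1/2} (log x - d)^m`. -/
noncomputable def phiR (d : ℝ) (m : ℕ) (x : ℝ) : ℝ :=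
  x ^ (-(1:ℝ)/2) * (Real.log x - d) ^ m

/-!
On `[a, b]` with `e^d ≤ a` and `b ≤ 2a` write `L = log x - d`. Then `0 ≤ L ≤ log b - d`, and
when `log b - d ≤ K p` every extra power of `L` beyond `L^{p-2}` costs at most a factor `K p`.
`φ_p^{(k)}`, `k ≤ 2`, is `x^{-1/2-k}` times a polynomial in `L` of degree `p` whose
coefficient of `L^{p-j}` is `O(p^{2-j})`, so each is `O((1+K)^2 p^2 (log b - d)^{p-2})`,
while `x^{-1/2-k} ≤ 2 b^{-1/2} a^{-k}`. For the theorem take `K = 1 + log c`, since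
`log (2a)^* - d ≤ log c + d ≤ (1 + log c) p`.
-/

open Real

lemma rpow_neg_half_le_two_mul {x b : ℝ} (hx : 0 < x) (hb : 0 < b) (hbx : b ≤ 2 * x) :
    x ^ (-(1:ℝ)/2) ≤ 2 * b ^ (-(1:ℝ)/2) := by
  have hsqrt : √b ≤ 2 * √x := by
    calc √b ≤ √(2 ^ 2 * x) := Real.sqrt_le_sqrt (by linarith)
      _ = 2 * √x := by rw [Real.sqrt_mul (by norm_num), Real.sqrt_sq (by norm_num)]
  rw [neg_div, Real.rpow_neg hx.le, Real.rpow_neg hb.le, ← Real.sqrt_eq_rpow,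
    ← Real.sqrt_eq_rpow, ← div_eq_mul_inv, le_div_iff₀ (Real.sqrt_pos.2 hb),
    inv_mul_le_iff₀ (Real.sqrt_pos.2 hx)]
  linarith

lemma rpow_neg_half_sub_le {a b x : ℝ} (ha : 0 < a) (hax : a ≤ x) (hb : 0 < b)
    (hbx : b ≤ 2 * x) (k : ℕ) :
    x ^ (-(1:ℝ)/2 - k) ≤ 2 * b ^ (-(1:ℝ)/2) * (a ^ k)⁻¹ := by
  have hx : 0 < x := ha.trans_le hax
  rw [Real.rpow_sub hx, Real.rpow_natCast, div_eq_mul_inv]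
  exact mul_le_mul (rpow_neg_half_le_two_mul hx hb hbx)
    (inv_anti₀ (pow_pos ha k) (pow_le_pow_left₀ ha.le hax k)) (by positivity) (by positivity)

lemma pow_add_le_of_le {L M B : ℝ} (hL : 0 ≤ L) (hLM : L ≤ M) (hMB : M ≤ B) (n j : ℕ) :
    L ^ (n + j) ≤ B ^ j * M ^ n := by
  rw [pow_add, mul_comm]
  exact mul_le_mul (pow_le_pow_left₀ hL (hLM.trans hMB) j) (pow_le_pow_left₀ hL hLM n)
    (pow_nonneg hL n) (pow_nonneg (hL.trans (hLM.trans hMB)) j)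

section LogPolynomials

variable {K L M : ℝ} (n : ℕ) (hL : 0 ≤ L) (hLM : L ≤ M) (hMK : M ≤ K * (n + 2))
include hL hLM hMK

lemma pow_add_two_le_mul_sq : L ^ (n + 2) ≤ K ^ 2 * ((n + 2) ^ 2 * M ^ n) :=
  (pow_add_le_of_le hL hLM hMK n 2).trans_eq (by ring)

lemma pow_succ_le_mul_sq : (n + 2) * L ^ (n + 1) ≤ K * ((n + 2) ^ 2 * M ^ n) := by
  calc (n + 2) * L ^ (n + 1) ≤ (n + 2) * ((K * (n + 2)) ^ 1 * M ^ n) := by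
        gcongr; exact pow_add_le_of_le hL hLM hMK n 1
    _ = K * ((n + 2) ^ 2 * M ^ n) := by ring

lemma pow_add_two_le : L ^ (n + 2) ≤ (1 + K) ^ 2 * ((n + 2) ^ 2 * M ^ n) := by
  have hK : 0 ≤ K := by nlinarith
  have hZ : 0 ≤ (n + 2) ^ 2 * M ^ n := by have := pow_nonneg (hL.trans hLM) n; positivity
  nlinarith [pow_add_two_le_mul_sq n hL hLM hMK]

lemma abs_deriv_poly_le :
    |(n + 2) * L ^ (n + 1) - L ^ (n + 2) / 2| ≤ (1 + K) ^ 2 * ((n + 2) ^ 2 * M ^ n) := by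
  have hZ : 0 ≤ (n + 2) ^ 2 * M ^ n := by have := pow_nonneg (hL.trans hLM) n; positivity
  have h1 := pow_succ_le_mul_sq n hL hLM hMK
  have h2 := pow_add_two_le_mul_sq n hL hLM hMK
  have : 0 ≤ (n + 2) * L ^ (n + 1) := by positivity
  have : 0 ≤ L ^ (n + 2) := by positivity
  rw [abs_le]; constructor <;> nlinarith

lemma abs_deriv_deriv_poly_le :
    |(n + 2) * (n + 1) * L ^ n - 2 * (n + 2) * L ^ (n + 1) + 3 / 4 * L ^ (n + 2)|
      ≤ (1 + K) ^ 2 * ((n + 2) ^ 2 * M ^ n) := by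
  have hZ : 0 ≤ (n + 2) ^ 2 * M ^ n := by have := pow_nonneg (hL.trans hLM) n; positivity
  have h0 : (n + 2) * (n + 1) * L ^ n ≤ (n + 2) ^ 2 * M ^ n := by
    have := pow_le_pow_left₀ hL hLM n
    calc (n + 2) * (n + 1) * L ^ n ≤ (n + 2) * (n + 2) * M ^ n := by gcongr; linarith
      _ = (n + 2) ^ 2 * M ^ n := by ring
  have h1 := pow_succ_le_mul_sq n hL hLM hMK
  have h2 := pow_add_two_le_mul_sq n hL hLM hMK
  have : 0 ≤ (n + 2) * (n + 1) * L ^ n := by positivity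
  have : 0 ≤ (n + 2) * L ^ (n + 1) := by positivity
  have : 0 ≤ L ^ (n + 2) := by positivity
  rw [abs_le]; constructor <;> nlinarith

end LogPolynomials

section Derivatives

variable (d : ℝ) (n : ℕ) {x : ℝ}

lemma hasDerivAt_phiR_add_two (hx : 0 < x) :
    HasDerivAt (phiR d (n + 2))
      (x ^ (-(3:ℝ)/2) * ((n + 2) * (log x - d) ^ (n + 1) - (log x - d) ^ (n + 2) / 2)) x := by
  have hpow : HasDerivAt (fun y : ℝ => y ^ (-(1:ℝ)/2)) (-(1:ℝ)/2 * x ^ (-(1:ℝ)/2 - 1)) x :=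
    Real.hasDerivAt_rpow_const (Or.inl hx.ne')
  have hlog : HasDerivAt (fun y : ℝ => (log y - d) ^ (n + 2))
      ((n + 2 : ℕ) * (log x - d) ^ (n + 1) * x⁻¹) x :=
    ((Real.hasDerivAt_log hx.ne').sub_const d).pow (n + 2)
  refine (hpow.mul hlog).congr_deriv ?_
  rw [show -(3:ℝ)/2 = -(1:ℝ)/2 - 1 by norm_num, Real.rpow_sub_one hx.ne']
  push_cast
  field_simp
  ring

lemma hasDerivAt_deriv_phiR_add_two (hx : 0 < x) :
    HasDerivAt (deriv (phiR d (n + 2)))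
      (x ^ (-(5:ℝ)/2) * ((n + 2) * (n + 1) * (log x - d) ^ n
        - 2 * (n + 2) * (log x - d) ^ (n + 1) + 3 / 4 * (log x - d) ^ (n + 2))) x := by
  have hderiv : deriv (phiR d (n + 2)) =ᶠ[nhds x] fun y =>
      y ^ (-(3:ℝ)/2) * ((n + 2) * (log y - d) ^ (n + 1) - (log y - d) ^ (n + 2) / 2) := by
    filter_upwards [Ioi_mem_nhds hx] with y hy
    exact (hasDerivAt_phiR_add_two d n hy).deriv
  have hpow : HasDerivAt (fun y : ℝ => y ^ (-(3:ℝ)/2)) (-(3:ℝ)/2 * x ^ (-(3:ℝ)/2 - 1)) x :=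
    Real.hasDerivAt_rpow_const (Or.inl hx.ne')
  have hlog : HasDerivAt (fun y : ℝ => log y - d) x⁻¹ x := (Real.hasDerivAt_log hx.ne').sub_const d
  have hpoly := ((hlog.fun_pow (n + 1)).const_mul ((n : ℝ) + 2)).fun_sub
    ((hlog.fun_pow (n + 2)).div_const 2)
  refine ((hpow.fun_mul hpoly).congr_of_eventuallyEq hderiv).congr_deriv ?_
  rw [show -(5:ℝ)/2 = -(3:ℝ)/2 - 1 by norm_num, Real.rpow_sub_one hx.ne']
  push_cast
  field_simp
  ring

end Derivatives

lemma log_sub_mem_Icc {d x b : ℝ} (hdx : exp d ≤ x) (hxb : x ≤ b) :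
    0 ≤ log x - d ∧ log x - d ≤ log b - d := by
  have hx : 0 < x := (exp_pos d).trans_le hdx
  exact ⟨sub_nonneg.2 ((le_log_iff_exp_le hx).2 hdx), sub_le_sub_right (log_le_log hx hxb) d⟩

section Bounds

variable {d K a b x : ℝ} (n : ℕ) (hda : exp d ≤ a) (hax : a ≤ x) (hxb : x ≤ b) (hba : b ≤ 2 * a)
include hda hax hxb hba

lemma abs_rpow_neg_half_sub_mul_le (k : ℕ) {Q : ℝ}
    (hQ : |Q| ≤ (1 + K) ^ 2 * ((n + 2) ^ 2 * (log b - d) ^ n)) :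
    |x ^ (-(1:ℝ)/2 - k) * Q| ≤ 2 * (1 + K) ^ 2 * ((n + 2) ^ 2 * phiR d n b) * (a ^ k)⁻¹ := by
  have ha : 0 < a := (exp_pos d).trans_le hda
  have hx : 0 < x := ha.trans_le hax
  have hb : 0 < b := hx.trans_le hxb
  rw [abs_mul, abs_of_pos (Real.rpow_pos_of_pos hx _)]
  calc x ^ (-(1:ℝ)/2 - k) * |Q|
      ≤ 2 * b ^ (-(1:ℝ)/2) * (a ^ k)⁻¹ * ((1 + K) ^ 2 * ((n + 2) ^ 2 * (log b - d) ^ n)) :=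
        mul_le_mul (rpow_neg_half_sub_le ha hax hb (by linarith) k) hQ
          (abs_nonneg Q) (by positivity)
    _ = 2 * (1 + K) ^ 2 * ((n + 2) ^ 2 * phiR d n b) * (a ^ k)⁻¹ := by rw [phiR]; ring

variable (hbK : log b - d ≤ K * (n + 2))
include hbK

lemma phiR_add_two_le : phiR d (n + 2) x ≤ 2 * (1 + K) ^ 2 * ((n + 2) ^ 2 * phiR d n b) := by
  obtain ⟨hL, hLb⟩ := log_sub_mem_Icc (hda.trans hax) hxb
  have h := abs_rpow_neg_half_sub_mul_le n hda hax hxb hba 0 (Q := (log x - d) ^ (n + 2))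
    (by rw [abs_of_nonneg (by positivity)]; exact pow_add_two_le n hL hLb hbK)
  simpa [phiR] using (le_abs_self _).trans h

lemma abs_deriv_phiR_add_two_le :
    |deriv (phiR d (n + 2)) x| ≤ 2 * (1 + K) ^ 2 * ((n + 2) ^ 2 * phiR d n b) * a⁻¹ := by
  obtain ⟨hL, hLb⟩ := log_sub_mem_Icc (hda.trans hax) hxb
  have hx : 0 < x := (exp_pos d).trans_le (hda.trans hax)
  rw [(hasDerivAt_phiR_add_two d n hx).deriv, show -(3:ℝ)/2 = -(1:ℝ)/2 - (1:ℕ) by norm_num,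
    ← pow_one a]
  exact abs_rpow_neg_half_sub_mul_le n hda hax hxb hba 1 (abs_deriv_poly_le n hL hLb hbK)

lemma abs_deriv_deriv_phiR_add_two_le :
    |deriv (deriv (phiR d (n + 2))) x|
      ≤ 2 * (1 + K) ^ 2 * ((n + 2) ^ 2 * phiR d n b) * (a ^ 2)⁻¹ := by
  obtain ⟨hL, hLb⟩ := log_sub_mem_Icc (hda.trans hax) hxb
  have hx : 0 < x := (exp_pos d).trans_le (hda.trans hax)
  rw [(hasDerivAt_deriv_phiR_add_two d n hx).deriv,
    show -(5:ℝ)/2 = -(1:ℝ)/2 - (2:ℕ) by norm_num]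
  exact abs_rpow_neg_half_sub_mul_le n hda hax hxb hba 2 (abs_deriv_deriv_poly_le n hL hLb hbK)

end Bounds

theorem stmt2 (c : ℝ) (hc : 1 < c) :
    ∃ C > (0:ℝ), ∀ d : ℝ, 2 ≤ d → ∀ p : ℕ, d ≤ (p : ℝ) → ∀ a : ℝ,
      Real.exp d ≤ a → a < c * Real.exp (2 * d) →
      ∀ x ∈ Set.Icc a (min (2 * a) (c * Real.exp (2 * d))),
        phiR d p x ≤
            C * ((p : ℝ) ^ 2 * phiR d (p - 2) (min (2 * a) (c * Real.exp (2 * d)))) ∧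
        |deriv (phiR d p) x| ≤
            C * ((p : ℝ) ^ 2 * phiR d (p - 2) (min (2 * a) (c * Real.exp (2 * d)))) * a⁻¹ ∧
        |deriv (deriv (phiR d p)) x| ≤
            C * ((p : ℝ) ^ 2 * phiR d (p - 2) (min (2 * a) (c * Real.exp (2 * d)))) * (a ^ 2)⁻¹ := by
  have hlogc : 0 < log c := log_pos hc
  refine ⟨2 * (1 + (1 + log c)) ^ 2, by positivity, ?_⟩
  intro d hd p hdp a hda _ x ⟨hax, hxb⟩
  have hp : 2 ≤ p := by exact_mod_cast hd.trans hdp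
  obtain ⟨n, rfl⟩ : ∃ n, p = n + 2 := ⟨p - 2, by omega⟩
  set b := min (2 * a) (c * exp (2 * d))
  have hba : b ≤ 2 * a := min_le_left _ _
  have hbK : log b - d ≤ (1 + log c) * (n + 2) := by
    have hb : 0 < b := (exp_pos d).trans_le (hda.trans (hax.trans hxb))
    have hlogb : log b ≤ log c + 2 * d := by
      calc log b ≤ log (c * exp (2 * d)) := log_le_log hb (min_le_right _ _)
        _ = log c + 2 * d := by rw [log_mul (by linarith) (exp_ne_zero _), log_exp]
    push_cast at hdp
    nlinarith
  simp only [Nat.add_sub_cancel]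
  push_cast
  exact ⟨phiR_add_two_le n hda hax hxb hba hbK, abs_deriv_phiR_add_two_le n hda hax hxb hba hbK,
    abs_deriv_deriv_phiR_add_two_le n hda hax hxb hba hbK⟩
end

section
/- Let d be a real number and p a positive integer with 0 < d ≤ p, let c > 1, and let g_p(x) = (log x − d)^p. Then for every integer k ≥ 0 and every real x ≥ c·e^{2d}, the k-th derivative of g_p satisfies |g_p^{(k)}(x)| ≤ k!·(p/d)^k·x^{−k}·(log x − d)^p. -/
/-!
Iterating `d/dx` on `f (log x)` gives the Faà di Bruno formula
`x ^ k * (f ∘ log)⁽ᵏ⁾(x) = ∑ⱼ s(k, j) f⁽ʲ⁾(log x)` with the signed Stirling numbers of the first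
kind, whose absolute values sum to `k!`. For `f u = (u - d) ^ p` and `u = log x - d ≥ d`, each
`|f⁽ʲ⁾(u)| = p(p-1)⋯(p-j+1) u ^ (p - j) ≤ (p / u) ^ j u ^ p` is at most `(p / d) ^ k u ^ p`
because `p / d ≥ 1`.
-/

open Finset Real
open scoped ContDiff

namespace Nat

-- `(-1) ^ (n + k)` is `(-1) ^ (n - k)` without truncated subtraction.
def signedStirlingFirst (n k : ℕ) : ℤ := (-1) ^ (n + k) * stirlingFirst n k

theorem signedStirlingFirst_succ_zero (n : ℕ) : signedStirlingFirst (n + 1) 0 = 0 := by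
  simp [signedStirlingFirst]

theorem signedStirlingFirst_succ_succ (n k : ℕ) :
    signedStirlingFirst (n + 1) (k + 1) =
      signedStirlingFirst n k - n * signedStirlingFirst n (k + 1) := by
  simp only [signedStirlingFirst, stirlingFirst_succ_succ]
  push_cast
  ring

theorem signedStirlingFirst_eq_zero_of_lt {n k : ℕ} (h : n < k) : signedStirlingFirst n k = 0 := by
  simp [signedStirlingFirst, stirlingFirst_eq_zero_of_lt h]

theorem abs_signedStirlingFirst (n k : ℕ) : |signedStirlingFirst n k| = stirlingFirst n k := by
  simp [signedStirlingFirst, abs_mul]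

theorem sum_range_stirlingFirst (n : ℕ) : ∑ k ∈ range (n + 1), stirlingFirst n k = n ! := by
  induction n with
  | zero => simp
  | succ n ih =>
    have hshift : ∑ k ∈ range (n + 1), stirlingFirst n (k + 1) + stirlingFirst n 0 = n ! := by
      rw [← sum_range_succ', sum_range_succ, stirlingFirst_eq_zero_of_lt (lt_add_one n), ih,
        add_zero]
    have hzero : n * stirlingFirst n 0 = 0 := by cases n <;> simp
    rw [sum_range_succ', stirlingFirst_succ_zero]
    simp only [stirlingFirst_succ_succ, sum_add_distrib, ← mul_sum, ih, factorial_succ]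
    grind

theorem sum_range_signedStirlingFirst_succ_mul {R : Type*} [CommRing R] (n : ℕ) (F : ℕ → R) :
    ∑ j ∈ range (n + 2), (signedStirlingFirst (n + 1) j : R) * F j =
      ∑ j ∈ range (n + 1), (signedStirlingFirst n j : R) * F (j + 1) -
        n * ∑ j ∈ range (n + 1), (signedStirlingFirst n j : R) * F j := by
  have hshift : ∑ j ∈ range (n + 1), (signedStirlingFirst n (j + 1) : R) * F (j + 1) +
      signedStirlingFirst n 0 * F 0 = ∑ j ∈ range (n + 1), (signedStirlingFirst n j : R) * F j := by
    rw [← sum_range_succ' (fun j => (signedStirlingFirst n j : R) * F j), sum_range_succ,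
      signedStirlingFirst_eq_zero_of_lt (lt_add_one n)]
    simp
  have hzero : (n : R) * signedStirlingFirst n 0 = 0 := by
    cases n <;> simp [signedStirlingFirst_succ_zero]
  rw [sum_range_succ', signedStirlingFirst_succ_zero]
  simp only [signedStirlingFirst_succ_succ, Int.cast_sub, Int.cast_mul, Int.cast_natCast,
    sub_mul, sum_sub_distrib, mul_assoc, ← mul_sum]
  linear_combination hzero * F 0 - (n : R) * hshift

end Nat

open Nat

theorem hasDerivAt_comp_log_div_pow {S : ℝ → ℝ} {S' x : ℝ} (hx : 0 < x) (k : ℕ)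
    (hS : HasDerivAt S S' (log x)) :
    HasDerivAt (fun y => S (log y) / y ^ k) ((S' - k * S (log x)) / x ^ (k + 1)) x := by
  refine ((hS.comp x (hasDerivAt_log hx.ne')).div (hasDerivAt_pow k x)
    (pow_ne_zero k hx.ne')).congr_deriv ?_
  cases k with
  | zero => simp [field]
  | succ k => simp only [Function.comp_apply, add_tsub_cancel_right]; field_simp; ring

theorem iteratedDeriv_comp_log {f : ℝ → ℝ} (hf : ContDiff ℝ ∞ f) (k : ℕ) {x : ℝ} (hx : 0 < x) :
    iteratedDeriv k (fun y => f (log y)) x =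
      (∑ j ∈ range (k + 1), (signedStirlingFirst k j : ℝ) * iteratedDeriv j f (log x)) / x ^ k := by
  induction k generalizing x with
  | zero => simp [signedStirlingFirst]
  | succ k ih =>
    have hS : ∀ t, HasDerivAt (fun t => ∑ j ∈ range (k + 1),
        (signedStirlingFirst k j : ℝ) * iteratedDeriv j f t)
        (∑ j ∈ range (k + 1), (signedStirlingFirst k j : ℝ) * iteratedDeriv (j + 1) f t) t := by
      intro t
      refine HasDerivAt.fun_sum fun j _ => HasDerivAt.const_mul _ ?_
      rw [iteratedDeriv_succ]
      exact ((hf.differentiable_iteratedDeriv j (by exact_mod_cast WithTop.coe_lt_top _)) t).hasDerivAt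
    have hev : iteratedDeriv k (fun y => f (log y)) =ᶠ[nhds x] fun y =>
        (∑ j ∈ range (k + 1), (signedStirlingFirst k j : ℝ) * iteratedDeriv j f (log y)) / y ^ k :=
      Filter.eventuallyEq_of_mem (Ioi_mem_nhds hx) fun y hy => ih hy
    rw [iteratedDeriv_succ, hev.deriv_eq, (hasDerivAt_comp_log_div_pow hx k (hS _)).deriv,
      sum_range_signedStirlingFirst_succ_mul]

theorem iteratedDeriv_sub_const_pow (d : ℝ) (p j : ℕ) (u : ℝ) :
    iteratedDeriv j (fun v => (v - d) ^ p) u = p.descFactorial j * (u - d) ^ (p - j) := by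
  rw [iteratedDeriv_comp_sub_const j (fun v => v ^ p) d]
  exact iteratedDeriv_pow p j

theorem descFactorial_mul_pow_le {d u : ℝ} {p j k : ℕ} (hd : 0 < d) (hdu : d ≤ u)
    (hdp : d ≤ p) (hjk : j ≤ k) :
    p.descFactorial j * u ^ (p - j) ≤ (p / d) ^ k * u ^ p := by
  have hu : 0 < u := hd.trans_le hdu
  rcases lt_or_ge p j with hpj | hjp
  · rw [descFactorial_eq_zero_iff_lt.mpr hpj, cast_zero, zero_mul]
    positivity
  calc (p.descFactorial j : ℝ) * u ^ (p - j)
      ≤ p ^ j * u ^ (p - j) := by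
        gcongr
        exact_mod_cast p.descFactorial_le_pow j
    _ ≤ p ^ j * u ^ (p - j) * (u / d) ^ j :=
        le_mul_of_one_le_right (by positivity) (one_le_pow₀ ((one_le_div hd).mpr hdu))
    _ = (p / d) ^ j * u ^ p := by
        rw [div_pow, div_pow, ← pow_sub_mul_pow u hjp]
        field_simp
    _ ≤ (p / d) ^ k * u ^ p := by
        gcongr
        exact (one_le_div hd).mpr hdp

theorem stmt4_general (d : ℝ) (hd : 0 < d) (p : ℕ) (hdp : d ≤ (p : ℝ))
    (c : ℝ) (hc : 1 < c) (k : ℕ) (x : ℝ) (hx : c * Real.exp (2 * d) ≤ x) :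
    |iteratedDeriv k (fun y : ℝ => (Real.log y - d) ^ p) x| ≤
      (k.factorial : ℝ) * ((p : ℝ) / d) ^ k * (Real.log x - d) ^ p / x ^ k := by
  have hce : 0 < c * exp (2 * d) := by positivity
  have hx0 : 0 < x := hce.trans_le hx
  have hlog : d ≤ log x - d := by
    have := log_le_log hce hx
    rw [log_mul (by positivity) (exp_pos _).ne', log_exp] at this
    linarith [log_pos hc]
  have hsmooth : ContDiff ℝ ∞ fun v : ℝ => (v - d) ^ p := by fun_prop
  rw [iteratedDeriv_comp_log hsmooth k hx0, abs_div, abs_of_pos (pow_pos hx0 k)]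
  gcongr
  calc |∑ j ∈ range (k + 1), (signedStirlingFirst k j : ℝ) *
          iteratedDeriv j (fun v => (v - d) ^ p) (log x)|
      ≤ ∑ j ∈ range (k + 1), (stirlingFirst k j : ℝ) * ((p / d) ^ k * (log x - d) ^ p) := by
        refine (abs_sum_le_sum_abs _ _).trans (sum_le_sum fun j hj => ?_)
        rw [abs_mul, ← Int.cast_abs, abs_signedStirlingFirst, Int.cast_natCast,
          iteratedDeriv_sub_const_pow, abs_of_nonneg (by have := hd.trans_le hlog; positivity)]
        exact mul_le_mul_of_nonneg_left
          (descFactorial_mul_pow_le hd hlog hdp (mem_range_succ_iff.mp hj)) (by positivity)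
    _ = k ! * (p / d) ^ k * (log x - d) ^ p := by
        rw [← sum_mul, ← cast_sum, sum_range_stirlingFirst, mul_assoc]

theorem stmt4 (d : ℝ) (hd : 0 < d) (p : ℕ) (hp : 1 ≤ p) (hdp : d ≤ (p : ℝ))
    (c : ℝ) (hc : 1 < c) (k : ℕ) (x : ℝ) (hx : c * Real.exp (2 * d) ≤ x) :
    |iteratedDeriv k (fun y : ℝ => (Real.log y - d) ^ p) x| ≤
      (k.factorial : ℝ) * ((p : ℝ) / d) ^ k * (Real.log x - d) ^ p / x ^ k :=
  stmt4_general d hd p hdp c hc k x hx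
end

section
/- Fix a constant c > 1. There exist constants C > 0 and d₀ > 0 such that for all real d ≥ d₀ and all integers m with m ≥ d − 2, one has γ(m+1, d/2 + (log c)/2) ≤ C·e^{−d/2}·2^{−m}·c^{m/d}·d^{m+1}/m. -/
/-!
Since `log (u ^ m * exp (-u))` is concave, the integrand on `[0, x]` lies below
`x ^ m * exp (-x) * exp (β (u - x))` with `β = m / x - 1 > 0`, whence
`γ(m + 1, x) ≤ exp (-x) * x ^ (m + 1) / (m - x)`. For `x = d/2 + log c / 2` and `m ≥ d - 2` with
`d` large, `m - x ≥ m / 4` and `x ^ (m + 1) ≤ (d/2) ^ (m + 1) * c ^ ((m + 1) / d)` by `1 + t ≤ exp t`.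
-/

open Real intervalIntegral

lemma le_mul_exp_div_sub_one {x : ℝ} (hx : 0 < x) (u : ℝ) : u ≤ x * exp (u / x - 1) := by
  have := add_one_le_exp (u / x - 1)
  calc u = x * (u / x) := by field_simp
    _ ≤ x * exp (u / x - 1) := by gcongr; linarith

lemma exp_neg_mul_pow_le {x u : ℝ} (hx : 0 < x) (hu : 0 ≤ u) (m : ℕ) :
    exp (-u) * u ^ m ≤ exp (-x) * x ^ m * exp ((m / x - 1) * (u - x)) := by
  calc exp (-u) * u ^ m ≤ exp (-u) * (x * exp (u / x - 1)) ^ m := by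
        gcongr; exact le_mul_exp_div_sub_one hx u
    _ = exp (-x) * x ^ m * exp ((m / x - 1) * (u - x)) := by
        rw [mul_pow, ← exp_nat_mul]
        simp only [mul_comm (exp (-x)), mul_assoc, ← exp_add, mul_left_comm _ (x ^ m)]
        congr 2
        field_simp
        ring

lemma integral_exp_mul_sub_le {β : ℝ} (hβ : 0 < β) (x : ℝ) :
    ∫ u in (0:ℝ)..x, exp (β * (u - x)) ≤ 1 / β := by
  have hderiv : ∀ u ∈ Set.uIcc 0 x,
      HasDerivAt (fun u => exp (β * (u - x)) / β) (exp (β * (u - x))) u := by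
    intro u _
    refine (((((hasDerivAt_id' u).sub_const x).const_mul β).exp).div_const β).congr_deriv ?_
    field_simp
  rw [integral_eq_sub_of_hasDerivAt hderiv (by apply Continuous.intervalIntegrable; fun_prop)]
  simp only [sub_self, mul_zero, exp_zero]
  have := exp_pos (β * (0 - x))
  rw [div_sub_div_same]
  gcongr
  linarith

theorem integral_exp_neg_mul_pow_le {m : ℕ} {x : ℝ} (hx : 0 < x) (hm : x < m) :
    ∫ u in (0:ℝ)..x, exp (-u) * u ^ m ≤ exp (-x) * x ^ (m + 1) / (m - x) := by
  have hβ : 0 < (m / x - 1 : ℝ) := by rw [sub_pos, one_lt_div hx]; exact hm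
  calc ∫ u in (0:ℝ)..x, exp (-u) * u ^ m
      ≤ ∫ u in (0:ℝ)..x, exp (-x) * x ^ m * exp ((m / x - 1) * (u - x)) := by
        refine integral_mono_on hx.le ?_ ?_ fun u hu => exp_neg_mul_pow_le hx hu.1 m
        all_goals apply Continuous.intervalIntegrable; fun_prop
    _ ≤ exp (-x) * x ^ m * (1 / (m / x - 1)) := by
        rw [integral_const_mul]
        gcongr
        exact integral_exp_mul_sub_le hβ x
    _ = exp (-x) * x ^ (m + 1) / (m - x) := by
        have : (m - x : ℝ) ≠ 0 := by linarith
        field_simp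
        ring

lemma one_add_log_div_pow_le {c d : ℝ} (hc : 1 ≤ c) (hd : 0 < d) (n : ℕ) :
    (1 + log c / d) ^ n ≤ c ^ (n / d) := by
  have hlog : 0 ≤ log c := log_nonneg hc
  calc (1 + log c / d) ^ n ≤ exp (log c / d) ^ n := by
        gcongr
        linarith [add_one_le_exp (log c / d)]
    _ = c ^ (n / d) := by
        rw [← exp_nat_mul, rpow_def_of_pos (by linarith)]
        ring_nf

lemma half_add_log_half_pow_le {c d : ℝ} (hc : 1 ≤ c) (hd : 1 ≤ d) (m : ℕ) :
    (d / 2 + log c / 2) ^ (m + 1) ≤ (d / 2) ^ (m + 1) * (c ^ ((m : ℝ) / d) * c) := by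
  have hd₀ : 0 < d := by linarith
  have hc_d : c ^ (1 / d) ≤ c := by
    simpa using rpow_le_rpow_of_exponent_le hc (show 1 / d ≤ 1 by rw [div_le_one hd₀]; exact hd)
  calc (d / 2 + log c / 2) ^ (m + 1) = (d / 2) ^ (m + 1) * (1 + log c / d) ^ (m + 1) := by
        rw [← mul_pow]; field_simp
    _ ≤ (d / 2) ^ (m + 1) * c ^ (((m + 1 : ℕ) : ℝ) / d) := by
        gcongr; exact one_add_log_div_pow_le hc hd₀ _
    _ = (d / 2) ^ (m + 1) * (c ^ ((m : ℝ) / d) * c ^ (1 / d)) := by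
        rw [← rpow_add (by linarith)]; push_cast; ring_nf
    _ ≤ (d / 2) ^ (m + 1) * (c ^ ((m : ℝ) / d) * c) := by gcongr

theorem stmt15 (c : ℝ) (hc : 1 < c) :
    ∃ C > (0:ℝ), ∃ d₀ > (0:ℝ), ∀ d : ℝ, d₀ ≤ d → ∀ m : ℕ, d - 2 ≤ (m : ℝ) →
      (∫ u in (0:ℝ)..(d / 2 + Real.log c / 2), Real.exp (-u) * u ^ m) ≤
        C * Real.exp (-d / 2) * ((2:ℝ) ^ m)⁻¹ * c ^ ((m : ℝ) / d) * d ^ (m + 1) / (m : ℝ) := by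
  have hlog : 0 < log c := log_pos hc
  refine ⟨2 * c, by linarith, 6 + 2 * log c, by linarith, fun d hd₀ m hm => ?_⟩
  have hd : 0 < d := by linarith
  have hxpow := half_add_log_half_pow_le hc.le (show 1 ≤ d by linarith) m
  set x := d / 2 + log c / 2 with hx_def
  have hx : 0 < x := by positivity
  -- `d₀` is chosen so that `m - x ≥ m / 4`.
  have hmx : (m : ℝ) / 4 ≤ m - x := by linarith
  calc ∫ u in (0:ℝ)..x, exp (-u) * u ^ m
      ≤ exp (-x) * x ^ (m + 1) / (m - x) := integral_exp_neg_mul_pow_le hx (by linarith)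
    _ ≤ exp (-d / 2) * ((d / 2) ^ (m + 1) * (c ^ ((m : ℝ) / d) * c)) / (m / 4) := by
        gcongr <;> linarith
    _ = 2 * c * exp (-d / 2) * ((2:ℝ) ^ m)⁻¹ * c ^ ((m : ℝ) / d) * d ^ (m + 1) / m := by
        rw [div_pow, pow_succ]
        field_simp
        ring
end
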